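/- Let F₇ = (x₀²x₁ + x₁²x₂ + x₂²x₀ − 3x₀x₁x₂)² − 4x₀x₁x₂(x₀−x₁)(x₁−x₂)(x₂−x₀) ∈ ℂ[x₀,x₁,x₂], a homogeneous sextic. The set of singular points of the plane curve {F₇ = 0} ⊂ ℙ²(ℂ) is exactly the four points (1:1:1), (1:0:0), (0:1:0) and (0:0:1). -/

import Mathlib

/-!
F₇ is invariant under the cyclic permutation of the coordinates, so its three partial
derivatives are the cyclic shifts of one quintic `partialF7`. An explicit ideal-membership
certificate puts `(x₁(x₀ - x₂))⁴` into the ideal they generate, hence by symmetry also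
`(x₂(x₁ - x₀))⁴`. So at a singular point `x₁(x₀ - x₂) = x₂(x₁ - x₀) = 0`, and the nonzero
solutions of these two equations are exactly the multiples of the four given points, at which
the gradient does vanish.
-/

open MvPolynomial

/-- Naruki's homogeneous sextic
`F₇ = (x₀²x₁ + x₁²x₂ + x₂²x₀ − 3x₀x₁x₂)² − 4x₀x₁x₂(x₀−x₁)(x₁−x₂)(x₂−x₀)`,
the branching locus of the singular K3 surface of discriminant 7. -/
noncomputable def F7 : MvPolynomial (Fin 3) ℂ :=
  (X 0 ^ 2 * X 1 + X 1 ^ 2 * X 2 + X 2 ^ 2 * X 0 - 3 * (X 0 * X 1 * X 2)) ^ 2 -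
    4 * (X 0 * X 1 * X 2 * (X 0 - X 1) * (X 1 - X 2) * (X 2 - X 0))

@[simp]
theorem Derivation.map_ofNat {R A M : Type*} [CommSemiring R] [CommSemiring A] [Algebra R A]
    [AddCommMonoid M] [Module A M] [Module R M] (D : Derivation R A M) (n : ℕ) [n.AtLeastTwo] :
    D (no_index (OfNat.ofNat n : A)) = 0 :=
  D.map_natCast n

def partialF7 {R : Type*} [CommRing R] (a b c : R) : R :=
  4 * a ^ 3 * b ^ 2 - 6 * a ^ 2 * b ^ 2 * c - 6 * a ^ 2 * b * c ^ 2 - 4 * a * b ^ 3 * c +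
    18 * a * b ^ 2 * c ^ 2 - 4 * a * b * c ^ 3 + 2 * a * c ^ 4 - 2 * b ^ 3 * c ^ 2 -
    2 * b ^ 2 * c ^ 3

theorem eval_pderiv_F7 (v : Fin 3 → ℂ) (i : Fin 3) :
    eval v (pderiv i F7) = partialF7 (v i) (v (i + 1)) (v (i + 2)) := by
  fin_cases i <;>
  · simp only [F7, partialF7, map_sub, map_add, map_mul, map_pow, Derivation.leibniz,
      Derivation.leibniz_pow, Derivation.map_ofNat, pderiv_X, Pi.single_apply, eval_X, eval_ofNat,
      smul_eq_mul, nsmul_eq_mul, Nat.cast_ofNat, Nat.add_one_sub_one, map_one, map_zero,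
      Fin.reduceFinMk, Fin.reduceAdd, Fin.reduceEq, if_true, if_false]
    ring

theorem mul_sub_eq_zero_of_partialF7_eq_zero {K : Type*} [Field K] [CharZero K] {a b c : K}
    (h₀ : partialF7 a b c = 0) (h₁ : partialF7 b c a = 0) (h₂ : partialF7 c a b = 0) :
    b * (a - c) = 0 := by
  unfold partialF7 at h₀ h₁ h₂
  -- a certificate for `(b (a - c))⁴ ∈ (partialF7 a b c, partialF7 b c a, partialF7 c a b)`
  linear_combination (exp := 4)
    ((-9/28 : K) * a^3 + 47/105 * a^2*b - 17/42 * a^2*c + 1/5 * a*b^2 +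
      29/28 * a*b*c + 53/140 * a*c^2 - 1/20 * b^3 - 37/70 * b^2*c - 1/10 * b*c^2) * h₀ +
    ((9/14 : K) * a^2*b - 94/105 * a*b^2 + 251/210 * a*b*c - 27/140 * a*c^2 -
      3/35 * b^2*c + 3/70 * b*c^2 - 1/20 * c^3) * h₁ +
    ((9/140 : K) * a^2*c - 1/10 * a*b^2 + 77/60 * a*b*c + 17/210 * a*c^2 -
      1/20 * b^2*c - 57/140 * b*c^2 - 3/14 * c^3) * h₂

theorem exists_smul_of_mul_sub_eq_zero {R : Type*} [CommRing R] [NoZeroDivisors R]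
    (v : Fin 3 → R) (hv : v ≠ 0) (h₁ : v 1 * (v 0 - v 2) = 0) (h₂ : v 2 * (v 1 - v 0) = 0) :
    ∃ c : R, c ≠ 0 ∧
      (v = c • ![1, 1, 1] ∨ v = c • ![1, 0, 0] ∨ v = c • ![0, 1, 0] ∨ v = c • ![0, 0, 1]) := by
  obtain ⟨a, b, c, rfl⟩ : ∃ a b c : R, v = ![a, b, c] :=
    ⟨v 0, v 1, v 2, by ext i; fin_cases i <;> rfl⟩
  simp only [Matrix.cons_val_zero, Matrix.cons_val_one, Matrix.cons_val_two] at h₁ h₂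
  simp only [ne_eq, Matrix.smul_cons, smul_eq_mul, mul_one, mul_zero, Matrix.smul_empty]
  rcases mul_eq_zero.mp h₁ with rfl | hac <;> rcases mul_eq_zero.mp h₂ with rfl | hba
  · exact ⟨a, fun ha => hv (by simp [ha]), by simp⟩
  · obtain rfl : a = 0 := (sub_eq_zero.mp hba).symm
    exact ⟨c, fun hc => hv (by simp [hc]), by simp⟩
  · obtain rfl : a = 0 := sub_eq_zero.mp hac
    exact ⟨b, fun hb => hv (by simp [hb]), by simp⟩
  · obtain rfl : a = c := sub_eq_zero.mp hac
    obtain rfl : b = a := sub_eq_zero.mp hba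
    exact ⟨b, fun hb => hv (by simp [hb]), by simp⟩

/-- The set of singular points of the plane sextic `{F₇ = 0} ⊂ ℙ²(ℂ)` is exactly the four
points `(1:1:1)`, `(1:0:0)`, `(0:1:0)` and `(0:0:1)`. -/
theorem singular_points_of_C7 (v : Fin 3 → ℂ) (hv : v ≠ 0) :
    (∀ i : Fin 3, MvPolynomial.eval v (MvPolynomial.pderiv i F7) = 0) ↔
      ∃ c : ℂ, c ≠ 0 ∧
        (v = c • ![1, 1, 1] ∨ v = c • ![1, 0, 0] ∨ v = c • ![0, 1, 0] ∨
          v = c • ![0, 0, 1]) := by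
  simp only [eval_pderiv_F7]
  constructor
  · intro h
    have h₀ := h 0
    have h₁ := h 1
    have h₂ := h 2
    simp only [Fin.reduceAdd] at h₀ h₁ h₂
    exact exists_smul_of_mul_sub_eq_zero v hv (mul_sub_eq_zero_of_partialF7_eq_zero h₀ h₁ h₂)
      (mul_sub_eq_zero_of_partialF7_eq_zero h₁ h₂ h₀)
  · rintro ⟨c, -, rfl | rfl | rfl | rfl⟩ <;> intro i <;> fin_cases i <;>
    simp only [partialF7, Fin.reduceFinMk, Fin.reduceAdd, Pi.smul_apply, Matrix.cons_val,
      smul_eq_mul] <;>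
    ring
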